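/- arXiv:1604.01199 — 2 statements merged into one kernel-verified Lean document; each statement's English description precedes it below -/
import Mathlib

section
/- Let A' ⊆ E ∪ {a, γ} and A = A' \ {a, γ}. If A' = A ∪ {γ}, cl(A) contains no OX-circuit of M, and e ∉ cl(A), then cl'(A') = cl(A) ∪ {γ} ∪ T(A). -/
open Set

namespace ESSplit

variable {α : Type*}

/-- A circuit of a matroid: a minimal dependent set. -/
def IsCircuit (M : Matroid α) (C : Set α) : Prop :=
  M.Dep C ∧ ∀ D, D ⊂ C → M.Indep D

/-- A binary matroid: one representable over GF(2). -/
def IsBinary (M : Matroid α) : Prop :=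
  ∃ (n : ℕ) (φ : α → (Fin n → ZMod 2)),
    ∀ I, I ⊆ M.E → (M.Indep I ↔ LinearIndependent (ZMod 2) (fun x : I => φ x.1))

/-- An OX-circuit: a circuit meeting `X` in an odd number of elements. -/
def IsOX (M : Matroid α) (X C : Set α) : Prop :=
  IsCircuit M C ∧ Odd (C ∩ X).ncard

/-- An EX-circuit: a circuit meeting `X` in an even number of elements. -/
def IsEX (M : Matroid α) (X C : Set α) : Prop :=
  IsCircuit M C ∧ Even (C ∩ X).ncard

/-- `D` is a union of two disjoint OX-circuits containing no EX-circuit. -/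
def OXUnion (M : Matroid α) (X D : Set α) : Prop :=
  ∃ C₁ C₂, IsOX M X C₁ ∧ IsOX M X C₂ ∧ Disjoint C₁ C₂ ∧ D = C₁ ∪ C₂ ∧
    ¬ ∃ C₀, IsEX M X C₀ ∧ C₀ ⊆ D

/-- The description of the circuits of the es-splitting matroid `M_X^e`. -/
def ESCircuit (M : Matroid α) (X : Set α) (e a γ : α) (C : Set α) : Prop :=
  C = {e, a, γ} ∨
  IsEX M X C ∨
  (OXUnion M X C ∧ ∀ D, OXUnion M X D → D ⊆ C → D = C) ∨
  (∃ C₀, IsOX M X C₀ ∧ C = C₀ ∪ {a}) ∨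
  (∃ C₀, IsOX M X C₀ ∧ e ∉ C₀ ∧ C = C₀ ∪ {e, γ}) ∨
  (∃ C₀, IsOX M X C₀ ∧ e ∈ C₀ ∧ C = (C₀ \ {e}) ∪ {γ}) ∨
  (∃ C₀, IsCircuit M C₀ ∧ e ∈ C₀ ∧ Odd (((C₀ \ {e}) ∩ X).ncard) ∧
      C = (C₀ \ {e}) ∪ {a, γ})

/-- `M'` is the es-splitting matroid `M_X^e` of `M` (with new elements `a`, `γ`):
it has ground set `M.E ∪ {a, γ}` and its circuits are exactly as described. -/
def IsESSplit (M M' : Matroid α) (X : Set α) (e a γ : α) : Prop :=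
  M'.E = M.E ∪ {a, γ} ∧ ∀ C, IsCircuit M' C ↔ ESCircuit M X e a γ C

/-- The set `T(A)`. -/
def T (M : Matroid α) (X : Set α) (e : α) (A : Set α) : Set α :=
  {x | x ∈ M.E \ A ∧ x ≠ e ∧ ∃ C, IsOX M X C ∧ x ∈ C ∧ e ∈ C ∧ C ⊆ A ∪ {e, x}}

/-- The set `F(A)`. -/
def F (M : Matroid α) (X A : Set α) : Set α :=
  {x | x ∈ M.closure A \ A ∧ ∃ C, IsOX M X C ∧ x ∈ C ∧ C ⊆ M.closure A}

/-- The rank of a set `A` in a (finite) matroid: the maximum size of an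
independent subset of `A`. -/
noncomputable def rk (M : Matroid α) (A : Set α) : ℕ :=
  sSup {n | ∃ I, M.Indep I ∧ I ⊆ A ∧ I.ncard = n}

end ESSplit

open ESSplit

namespace ESSplit

variable {α : Type*} {M M' : Matroid α} {X A C : Set α} {e a γ x : α}

theorem isCircuit_iff_isCircuit : IsCircuit M C ↔ M.IsCircuit C :=
  Matroid.isCircuit_iff_forall_ssubset.symm

theorem IsCircuit.subset_ground (hC : IsCircuit M C) : C ⊆ M.E :=
  (isCircuit_iff_isCircuit.1 hC).subset_ground

theorem IsCircuit.mem_closure (hC : IsCircuit M C) (hxC : x ∈ C) (hCA : C \ {x} ⊆ A) :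
    x ∈ M.closure A :=
  M.closure_subset_closure hCA
    ((isCircuit_iff_isCircuit.1 hC).mem_closure_sdiff_singleton_of_mem hxC)

theorem exists_isCircuit_of_mem_closure (hx : x ∈ M.closure A) (hxA : x ∉ A) :
    ∃ C, IsCircuit M C ∧ x ∈ C ∧ C ⊆ insert x A := by
  obtain ⟨C, hCA, hC, hxC⟩ := (Matroid.mem_closure_iff_exists_isCircuit hxA).1 hx
  exact ⟨C, isCircuit_iff_isCircuit.2 hC, hxC, hCA⟩

theorem closure_subset_closure_insert_of_isESSplit (hsplit : IsESSplit M M' X e a γ)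
    (hnoOX : ¬ ∃ C, IsOX M X C ∧ C ⊆ M.closure A) (hAE : A ⊆ M.E) :
    M.closure A ⊆ M'.closure (insert γ A) := by
  intro x hx
  by_cases hxA : x ∈ A
  · exact M'.mem_closure_of_mem' (mem_insert_of_mem γ hxA) (hsplit.1 ▸ Or.inl (hAE hxA))
  obtain ⟨C, hC, hxC, hCA⟩ := exists_isCircuit_of_mem_closure hx hxA
  have hEX : IsEX M X C := by
    refine ⟨hC, (Nat.even_or_odd _).resolve_right fun hodd => hnoOX ⟨C, ⟨hC, hodd⟩, ?_⟩⟩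
    exact hCA.trans (insert_subset hx (M.subset_closure A hAE))
  have hC' : IsCircuit M' C := (hsplit.2 C).2 (Or.inr (Or.inl hEX))
  exact hC'.mem_closure hxC ((sdiff_singleton_subset_iff.2 hCA).trans (subset_insert γ A))

theorem T_subset_closure_insert_of_isESSplit (hsplit : IsESSplit M M' X e a γ) :
    T M X e A ⊆ M'.closure (insert γ A) := by
  rintro x ⟨-, hxe, C, hOX, hxC, heC, hCA⟩
  have hC' : IsCircuit M' ((C \ {e}) ∪ {γ}) :=
    (hsplit.2 _).2 (Or.inr (Or.inr (Or.inr (Or.inr (Or.inr (Or.inl ⟨C, hOX, heC, rfl⟩))))))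
  refine hC'.mem_closure (Or.inl ⟨hxC, hxe⟩) ?_
  rintro y ⟨⟨hyC, hye⟩ | rfl, hyx⟩
  · rcases hCA hyC with hyA | rfl | rfl
    · exact mem_insert_of_mem γ hyA
    · exact absurd rfl hye
    · exact absurd rfl hyx
  · exact mem_insert _ A

/-- Each circuit of `M_X^e` through `x` inside `A ∪ {γ, x}` either is an EX-circuit of `M`,
giving `x ∈ cl(A)`, or is `(C \ {e}) ∪ {γ}` for an OX-circuit `C` through `e`, giving
`x ∈ T(A)`; the hypotheses on `A` rule out every other type of circuit. -/
theorem mem_closure_or_mem_T_of_esCircuit {C' : Set α} (hC' : ESCircuit M X e a γ C')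
    (hxC' : x ∈ C') (hC'A : C' ⊆ insert x (insert γ A)) (hxA : x ∉ insert γ A)
    (hnoOX : ¬ ∃ C, IsOX M X C ∧ C ⊆ M.closure A) (heA : e ∉ M.closure A)
    (hAE : A ⊆ M.E) (heE : e ∈ M.E) (haE : a ∉ M.E) (hγE : γ ∉ M.E) (haγ : a ≠ γ) :
    x ∈ M.closure A ∨ x ∈ T M X e A := by
  have hOX : ∀ C, IsOX M X C → ¬ C ⊆ A := fun C hC hCA =>
    hnoOX ⟨C, hC, M.subset_closure_of_subset' hCA hC.1.subset_ground⟩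
  have hsubA : ∀ S ⊆ C', S ⊆ M.E → x ∉ S → S ⊆ A := fun S hSC hSE hxS =>
    (subset_insert_iff_of_notMem fun hγS => hγE (hSE hγS)).1
      ((subset_insert_iff_of_notMem hxS).1 (hSC.trans hC'A))
  have heq_x : ∀ y ∈ C', y ≠ γ → y ∉ A → y = x := fun y hyC hyγ hyA =>
    ((hC'A hyC).resolve_right fun h => h.elim hyγ hyA)
  have hax : a ∈ C' → a = x := fun haC => heq_x a haC haγ fun haA => haE (hAE haA)
  have hex : e ∈ C' → e = x := fun heC => heq_x e heC (fun h => hγE (h ▸ heE))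
    fun heA' => heA (M.subset_closure A hAE heA')
  have ha_notMem : ∀ {S : Set α}, S ⊆ M.E → a ∉ S := fun hSE haS => haE (hSE haS)
  rcases hC' with rfl | hEX | ⟨⟨C₁, C₂, h₁, h₂, hdisj, rfl, -⟩, -⟩ | ⟨C, hC, rfl⟩ |
    ⟨C, hC, heC, rfl⟩ | ⟨C, hC, heC, rfl⟩ | ⟨C, hC, heC, -, rfl⟩
  · exact absurd ((hex (by simp)).trans (hax (by simp)).symm) fun h => haE (h ▸ heE)
  · exact Or.inl (hEX.1.mem_closure hxC'
      (hsubA _ sdiff_subset (sdiff_subset.trans hEX.1.subset_ground) fun h => h.2 rfl))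
  · exfalso
    rcases hxC' with hx₁ | hx₂
    · exact hOX C₂ h₂ (hsubA C₂ subset_union_right h₂.1.subset_ground
        (disjoint_left.1 hdisj hx₁))
    · exact hOX C₁ h₁ (hsubA C₁ subset_union_left h₁.1.subset_ground
        fun hx₁ => disjoint_left.1 hdisj hx₁ hx₂)
  · exact (hOX C hC (hsubA C subset_union_left hC.1.subset_ground
      (hax (by simp) ▸ ha_notMem hC.1.subset_ground))).elim
  · exact (hOX C hC (hsubA C subset_union_left hC.1.subset_ground
      fun hxC => heC ((hex (by simp)) ▸ hxC))).elim
  · rcases hxC' with ⟨hxC, hxe⟩ | rfl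
    · refine Or.inr ⟨⟨hC.1.subset_ground hxC, fun h => hxA (mem_insert_of_mem _ h)⟩, hxe, C, hC,
        hxC, heC, fun y hyC => ?_⟩
      by_cases hye : y = e
      · exact Or.inr (Or.inl hye)
      by_cases hyA : y ∈ A
      · exact Or.inl hyA
      exact Or.inr (Or.inr (heq_x y (Or.inl ⟨hyC, hye⟩)
        (fun h => hγE (h ▸ hC.1.subset_ground hyC)) hyA))
    · exact absurd (mem_insert _ A) hxA
  · have hCE : C \ {e} ⊆ M.E := sdiff_subset.trans hC.subset_ground
    exact absurd (hC.mem_closure heC (hsubA _ subset_union_left hCE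
      (hax (by simp) ▸ ha_notMem hCE))) heA

theorem closure_insert_subset_of_isESSplit (hsplit : IsESSplit M M' X e a γ)
    (hnoOX : ¬ ∃ C, IsOX M X C ∧ C ⊆ M.closure A) (heA : e ∉ M.closure A)
    (hAE : A ⊆ M.E) (heE : e ∈ M.E) (haE : a ∉ M.E) (hγE : γ ∉ M.E) (haγ : a ≠ γ) :
    M'.closure (insert γ A) ⊆ M.closure A ∪ {γ} ∪ T M X e A := by
  intro x hx
  by_cases hxA : x ∈ insert γ A
  · rcases hxA with rfl | hxA
    · exact Or.inl (Or.inr rfl)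
    · exact Or.inl (Or.inl (M.subset_closure A hAE hxA))
  obtain ⟨C', hC', hxC', hC'A⟩ := exists_isCircuit_of_mem_closure hx hxA
  rcases mem_closure_or_mem_T_of_esCircuit ((hsplit.2 C').1 hC') hxC' hC'A hxA hnoOX heA hAE
    heE haE hγE haγ with hxcl | hxT
  · exact Or.inl (Or.inl hxcl)
  · exact Or.inr hxT

end ESSplit

theorem closure_eq_closure_union_gamma_union_T_general
    {α : Type*} (M M' : Matroid α) (X : Set α) (e a γ : α)
    (hXE : X ⊆ M.E) (heX : e ∈ X) (haE : a ∉ M.E) (hγE : γ ∉ M.E) (haγ : a ≠ γ)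
    (hsplit : IsESSplit M M' X e a γ)
    (A' A : Set α) (hA'sub : A' ⊆ M.E ∪ {a, γ}) (hA : A = A' \ {a, γ})
    (hAA : A' = A ∪ {γ}) (hnoOX : ¬ ∃ C, IsOX M X C ∧ C ⊆ M.closure A)
    (heA : e ∉ M.closure A) :
    M'.closure A' = M.closure A ∪ {γ} ∪ T M X e A := by
  have hAE : A ⊆ M.E := by
    rw [hA]
    exact fun y hy => (hA'sub hy.1).resolve_right hy.2
  have hγ : γ ∈ M'.closure (insert γ A) :=
    M'.mem_closure_of_mem' (mem_insert γ A) (hsplit.1 ▸ Or.inr (Or.inr rfl))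
  rw [hAA, union_singleton]
  refine (closure_insert_subset_of_isESSplit hsplit hnoOX heA hAE (hXE heX) haE hγE haγ).antisymm
    (union_subset (union_subset ?_ (singleton_subset_iff.2 hγ)) ?_)
  · exact closure_subset_closure_insert_of_isESSplit hsplit hnoOX hAE
  · exact T_subset_closure_insert_of_isESSplit hsplit

theorem closure_eq_closure_union_gamma_union_T
    {α : Type*} (M M' : Matroid α) (X : Set α) (e a γ : α)
    (hfin : M.E.Finite) (hbin : IsBinary M)
    (hXE : X ⊆ M.E) (heX : e ∈ X) (haE : a ∉ M.E) (hγE : γ ∉ M.E) (haγ : a ≠ γ)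
    (hsplit : IsESSplit M M' X e a γ)
    (A' A : Set α) (hA'sub : A' ⊆ M.E ∪ {a, γ}) (hA : A = A' \ {a, γ})
    (hAA : A' = A ∪ {γ}) (hnoOX : ¬ ∃ C, IsOX M X C ∧ C ⊆ M.closure A)
    (heA : e ∉ M.closure A) :
    M'.closure A' = M.closure A ∪ {γ} ∪ T M X e A :=
  closure_eq_closure_union_gamma_union_T_general M M' X e a γ hXE heX haE hγE haγ hsplit A' A hA'sub
    hA hAA hnoOX heA
end

section
/- Let M be a binary matroid on a ground set E, X ⊆ E, e ∈ X, and A ⊆ E. Suppose C is an OX-circuit of M and C' is an EX-circuit of M such that e ∈ C ⊆ A ∪ {e} and e ∈ C' ⊆ A ∪ {e}. Then M has an OX-circuit C'' with C'' ⊆ A. -/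
/-!
Over `GF(2)` a circuit is a set of vectors whose sum is zero, so `C ∆ C'` is a zero-sum set; it
lies in `A` because `e` cancels, and it meets `X` in an odd number of elements because `C` does
and `C'` does not. A nonempty zero-sum set is dependent and hence contains a circuit; if that
circuit meets `X` evenly, removing it leaves a smaller zero-sum set that still meets `X` oddly.
-/

open Set

open scoped symmDiff

namespace Set

variable {α : Type*} {s t : Set α}

theorem even_ncard_symmDiff_iff (hs : s.Finite) (ht : t.Finite) :
    Even (s ∆ t).ncard ↔ (Even s.ncard ↔ Even t.ncard) := by
  have hst : (s ∆ t).ncard = (s \ t).ncard + (t \ s).ncard :=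
    ncard_union_eq disjoint_sdiff_sdiff hs.sdiff ht.sdiff
  rw [hst, ← ncard_inter_add_ncard_sdiff_eq_ncard s t hs,
    ← ncard_inter_add_ncard_sdiff_eq_ncard t s ht, inter_comm t s]
  simp only [Nat.even_add]
  tauto

theorem odd_ncard_symmDiff_inter (hs : s.Finite) (ht : t.Finite) {X : Set α}
    (hsX : Odd (s ∩ X).ncard) (htX : Even (t ∩ X).ncard) : Odd (s ∆ t ∩ X).ncard := by
  rw [← Nat.not_even_iff_odd] at hsX ⊢
  rw [inter_symmDiff_distrib_right,
    even_ncard_symmDiff_iff (hs.inter_of_left X) (ht.inter_of_left X)]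
  tauto

end Set

theorem Finset.sum_symmDiff {α V : Type*} [DecidableEq α] [AddCommGroup V] [Module (ZMod 2) V]
    (s t : Finset α) (f : α → V) :
    ∑ x ∈ s ∆ t, f x = ∑ x ∈ s, f x + ∑ x ∈ t, f x := by
  rw [symmDiff_def, Finset.sup_eq_union, Finset.sum_union disjoint_sdiff_sdiff,
    ← Finset.sum_inter_add_sum_sdiff s t, ← Finset.sum_inter_add_sum_sdiff t s,
    Finset.inter_comm t s, add_comm (∑ x ∈ s ∩ t, f x), ZModModule.add_add_add_cancel]

namespace ESSplit

variable {α V : Type*}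

lemma isCircuit_iff_matroid_isCircuit {M : Matroid α} {C : Set α} :
    IsCircuit M C ↔ M.IsCircuit C :=
  Matroid.isCircuit_iff_forall_ssubset.symm

section Binary

variable [AddCommGroup V] [Module (ZMod 2) V] {M : Matroid α} {φ : α → V}

def IsBinaryRep (M : Matroid α) (φ : α → V) : Prop :=
  ∀ I, I ⊆ M.E → (M.Indep I ↔ LinearIndependent (ZMod 2) (fun x : I => φ x.1))

lemma IsBinaryRep.exists_finset_sum_eq_zero (hφ : IsBinaryRep M φ) {C : Set α}
    (hC : M.IsCircuit C) : ∃ s : Finset α, (s : Set α) = C ∧ ∑ x ∈ s, φ x = 0 := by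
  obtain ⟨l, hlC, hl, hl0⟩ :=
    linearDepOn_iff'.1 fun h => hC.dep.not_indep ((hφ C hC.subset_ground).2 h)
  have hlC : (l.support : Set α) ⊆ C := (Finsupp.mem_supported _ l).1 hlC
  -- a proper subset of a circuit is independent, so cannot carry a nontrivial relation
  have hsupp : (l.support : Set α) = C := by
    by_contra hne
    have hss := hlC.ssubset_of_ne hne
    have hind := (hφ _ (hss.subset.trans hC.subset_ground)).1 (hC.ssubset_indep hss)
    exact hl0 (linearIndepOn_iff.1 hind l ((Finsupp.mem_supported _ l).2 subset_rfl) hl)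
  refine ⟨l.support, hsupp, ?_⟩
  rw [← hl, Finsupp.linearCombination_apply, Finsupp.sum]
  refine Finset.sum_congr rfl fun x hx => ?_
  rw [show l x = 1 from Fin.eq_one_of_ne_zero _ (Finsupp.mem_support_iff.1 hx), one_smul]

lemma IsBinaryRep.dep_of_sum_eq_zero (hφ : IsBinaryRep M φ) {s : Finset α}
    (hsE : (s : Set α) ⊆ M.E) (hs : s.Nonempty) (hsum : ∑ x ∈ s, φ x = 0) : M.Dep s := by
  refine ⟨fun hind => ?_, hsE⟩
  obtain ⟨x, hx⟩ := hs
  exact one_ne_zero <|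
    linearIndepOn_finset_iff.1 ((hφ _ hsE).1 hind) (fun _ => 1) (by simpa using hsum) x hx

lemma IsBinaryRep.exists_isOX_subset (hφ : IsBinaryRep M φ) (X : Set α) (s : Finset α)
    (hsE : (s : Set α) ⊆ M.E) (hsum : ∑ x ∈ s, φ x = 0)
    (hsX : Odd ((s : Set α) ∩ X).ncard) :
    ∃ C, IsOX M X C ∧ C ⊆ s := by
  classical
  induction s using Finset.strongInduction with
  | H s ih =>
    have hs : s.Nonempty := by
      rw [Finset.nonempty_iff_ne_empty]
      rintro rfl
      simp at hsX
    obtain ⟨C₁, hC₁s, hC₁⟩ := (hφ.dep_of_sum_eq_zero hsE hs hsum).exists_isCircuit_subset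
    obtain ⟨t, rfl, htsum⟩ := hφ.exists_finset_sum_eq_zero hC₁
    by_cases htX : Even ((t : Set α) ∩ X).ncard
    · have hts : t ⊆ s := Finset.coe_subset.1 hC₁s
      have hsdiff : s ∆ t = s \ t := symmDiff_of_ge hts
      obtain ⟨C, hC, hCs⟩ := ih (s ∆ t)
        (hsdiff ▸ Finset.sdiff_ssubset hts (Finset.coe_nonempty.1 hC₁.nonempty))
        (by rw [hsdiff, Finset.coe_sdiff]; exact sdiff_subset.trans hsE)
        (by rw [Finset.sum_symmDiff, hsum, htsum, add_zero])
        (by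
          rw [Finset.coe_symmDiff]
          exact Set.odd_ncard_symmDiff_inter s.finite_toSet t.finite_toSet hsX htX)
      refine ⟨C, hC, hCs.trans ?_⟩
      rw [hsdiff, Finset.coe_sdiff]
      exact sdiff_subset
    · exact ⟨t, ⟨isCircuit_iff_matroid_isCircuit.2 hC₁, Nat.not_even_iff_odd.1 htX⟩,
        hC₁s⟩

end Binary

end ESSplit

open ESSplit

theorem exists_OX_circuit_in_A_general
    {α : Type*} (M : Matroid α) (X : Set α) (e : α) (A : Set α)
    (hbin : IsBinary M)
    (C C' : Set α)
    (hC : IsOX M X C) (hC' : IsEX M X C')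
    (heC : e ∈ C) (hCsub : C ⊆ A ∪ {e})
    (heC' : e ∈ C') (hC'sub : C' ⊆ A ∪ {e}) :
    ∃ C'', IsOX M X C'' ∧ C'' ⊆ A := by
  classical
  obtain ⟨n, φ, hφ : IsBinaryRep M φ⟩ := hbin
  have hCA : C ∆ C' ⊆ A := by
    rintro x (⟨hxC, hxC'⟩ | ⟨hxC', hxC⟩)
    · exact (hCsub hxC).resolve_right fun hxe => hxC' (hxe ▸ heC')
    · exact (hC'sub hxC').resolve_right fun hxe => hxC (hxe ▸ heC)
  obtain ⟨s, rfl, hs⟩ := hφ.exists_finset_sum_eq_zero (isCircuit_iff_matroid_isCircuit.1 hC.1)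
  obtain ⟨t, rfl, ht⟩ := hφ.exists_finset_sum_eq_zero (isCircuit_iff_matroid_isCircuit.1 hC'.1)
  rw [← Finset.coe_symmDiff] at hCA
  have hstE : ((s ∆ t : Finset α) : Set α) ⊆ M.E := by
    rw [Finset.coe_symmDiff]
    exact symmDiff_subset_union.trans
      (union_subset hC.1.1.subset_ground hC'.1.1.subset_ground)
  have hstX : Odd (((s ∆ t : Finset α) : Set α) ∩ X).ncard := by
    rw [Finset.coe_symmDiff]
    exact Set.odd_ncard_symmDiff_inter s.finite_toSet t.finite_toSet hC.2 hC'.2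
  obtain ⟨C'', hC'', hC''st⟩ :=
    hφ.exists_isOX_subset X (s ∆ t) hstE (by rw [Finset.sum_symmDiff, hs, ht, add_zero]) hstX
  exact ⟨C'', hC'', hC''st.trans hCA⟩

theorem exists_OX_circuit_in_A
    {α : Type*} (M : Matroid α) (X : Set α) (e : α) (A : Set α)
    (hfin : M.E.Finite) (hbin : IsBinary M)
    (hXE : X ⊆ M.E) (heX : e ∈ X) (hAE : A ⊆ M.E)
    (C C' : Set α)
    (hC : IsOX M X C) (hC' : IsEX M X C')
    (heC : e ∈ C) (hCsub : C ⊆ A ∪ {e})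
    (heC' : e ∈ C') (hC'sub : C' ⊆ A ∪ {e}) :
    ∃ C'', IsOX M X C'' ∧ C'' ⊆ A :=
  exists_OX_circuit_in_A_general M X e A hbin C C' hC hC' heC hCsub heC' hC'sub
end
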